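/- Let S be a commutative ring in which 2 is a nonzerodivisor, let ū ∈ S[[u]] be a power series with zero constant term satisfying ū ≡ −u mod (u²), and let σ : S[[u]] → S[[u]] be the S-algebra endomorphism given by substituting u ↦ ū; assume σ is an involution, i.e. σ(ū) = u. Assume further that there exists a ∈ S whose image in S/2S is a nonzerodivisor and such that ū ≡ u + a·u² modulo the ideal of S[[u]] generated by 2 and u³. Then for a power series f ∈ S[[u]], one has σ(f) = −f if and only if f lies in (u − ū)·S[[w]], where S[[w]] denotes the image of the substitution homomorphism S[[t]] → S[[u]] sending t to w := u·ū. -/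

import Mathlib

/-!
Since `ū ≡ -u mod u²`, the series `w = u·ū` is `u²` times a unit, so every `f` can be written
`P(w) + u·Q(w)`. The involution `σ` fixes `w` and sends `u` to `ū`, so `σf = -f` becomes
`2·P(w) + (u + ū)·Q(w) = 0`. Modulo 2, `u + ū ≡ u²·(a + ⋯)` is a nonzerodivisor and substituting
`w` is injective (as `w` is a nonzerodivisor with zero constant term), hence `Q = 2·G`.
Cancelling 2 gives `P(w) = -(u + ū)·G(w)`, and then `f = (u - ū)·G(w)`.
-/

open PowerSeries

/-- Substitution of the power series `w` (with zero constant term) into the power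
series `f`: the coefficient of `u^n` in `f(w)` is `∑_{k ≤ n} f_k · (w^k)_n`,
which is the usual composition of formal power series. -/
noncomputable def PowerSeries.substInto {S : Type*} [CommRing S] (w f : PowerSeries S) :
    PowerSeries S :=
  PowerSeries.mk fun n =>
    ∑ k ∈ Finset.range (n + 1), PowerSeries.coeff (R := S) k f * PowerSeries.coeff (R := S) n (w ^ k)

namespace PowerSeries

variable {S : Type*} [CommRing S]

theorem substInto_eq_subst {w : S⟦X⟧} (hw : constantCoeff w = 0) (f : S⟦X⟧) :
    substInto w f = subst w f := by
  ext n
  rw [coeff_subst' (HasSubst.of_constantCoeff_zero' hw), substInto, coeff_mk,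
    finsum_eq_sum_of_support_subset _ (s := Finset.range (n + 1))]
  · rfl
  intro k hk
  by_contra hkn
  rw [Finset.coe_range, Set.mem_Iio, not_lt] at hkn
  refine hk ?_
  show coeff k f • coeff n (w ^ k) = 0
  rw [smul_eq_mul, X_pow_dvd_iff.mp (pow_dvd_pow_of_dvd (X_dvd_iff.mpr hw) k) n (by omega),
    mul_zero]

theorem mem_nonZeroDivisors_of_constantCoeff {φ : S⟦X⟧}
    (hφ : constantCoeff φ ∈ nonZeroDivisors S) : φ ∈ nonZeroDivisors S⟦X⟧ :=
  MvPowerSeries.mem_nonZeroDivisors_of_constantCoeff hφ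

theorem map_X_sq_mul_mem_nonZeroDivisors {T : Type*} [CommRing T] {v : S⟦X⟧} (hv : IsUnit v)
    (φ : S →+* T) : map φ (X ^ 2 * v) ∈ nonZeroDivisors T⟦X⟧ := by
  rw [map_mul, map_pow, map_X]
  exact mul_mem (pow_mem MvPowerSeries.X_mem_nonzeroDivisors 2)
    (hv.map (map φ)).mem_nonZeroDivisors

theorem subst_eq_mul_subst_shift_add_C {w : S⟦X⟧} (hw : constantCoeff w = 0) (g : S⟦X⟧) :
    subst w g = w * subst w (mk fun p => coeff (p + 1) g) + C (constantCoeff g) := by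
  have hs := HasSubst.of_constantCoeff_zero' hw
  conv_lhs => rw [eq_X_mul_shift_add_const g]
  rw [subst_add hs, subst_mul hs, subst_X hs, subst_C]
  rfl

theorem eq_zero_of_subst_eq_zero {w : S⟦X⟧} (hw0 : constantCoeff w = 0)
    (hw : w ∈ nonZeroDivisors S⟦X⟧) {g : S⟦X⟧} (hg : subst w g = 0) : g = 0 := by
  have hshift : ∀ g : S⟦X⟧, subst w g = 0 →
      constantCoeff g = 0 ∧ subst w (mk fun p => coeff (p + 1) g) = 0 := by
    intro g hg
    rw [subst_eq_mul_subst_shift_add_C hw0] at hg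
    have hg0 : constantCoeff g = 0 := by simpa [hw0] using congrArg constantCoeff hg
    rw [hg0, map_zero, add_zero] at hg
    exact ⟨hg0, (mul_left_mem_nonZeroDivisors_eq_zero_iff hw).mp hg⟩
  suffices ∀ n (g : S⟦X⟧), subst w g = 0 → coeff n g = 0 from
    ext fun n => by simpa using this n g hg
  intro n
  induction n with
  | zero => intro g hg; simpa using (hshift g hg).1
  | succ n ih => intro g hg; simpa using ih _ (hshift g hg).2

theorem exists_eq_subst_add_X_mul_subst {w : S⟦X⟧} (hw0 : constantCoeff w = 0) (hw : w ∣ X ^ 2)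
    (f : S⟦X⟧) : ∃ P Q : S⟦X⟧, f = subst w P + X * subst w Q := by
  obtain ⟨u, hu⟩ := hw
  have step : ∀ g : S⟦X⟧, ∃ a b : S, ∃ h : S⟦X⟧, g = C a + C b * X + w * h := by
    intro g
    refine ⟨constantCoeff g, coeff 1 g, u * mk fun p => coeff (p + 2) g, ?_⟩
    rw [← mul_assoc, ← hu]
    ext (_ | _ | n) <;> simp [coeff_X_pow_mul']
  choose a b h hstep using step
  -- `P g` and `Q g` collect the digits `a`, `b` along the orbit of `g` under the division step `h`;
  -- the error `E g` of the resulting expansion is `w · E (h g)`, hence divisible by every `X ^ N`.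
  let P (g : S⟦X⟧) : S⟦X⟧ := mk fun n => a (h^[n] g)
  let Q (g : S⟦X⟧) : S⟦X⟧ := mk fun n => b (h^[n] g)
  have hP : ∀ g, subst w (P g) = w * subst w (P (h g)) + C (a g) := fun g => by
    rw [subst_eq_mul_subst_shift_add_C hw0]; simp [P]
  have hQ : ∀ g, subst w (Q g) = w * subst w (Q (h g)) + C (b g) := fun g => by
    rw [subst_eq_mul_subst_shift_add_C hw0]; simp [Q]
  let E (g : S⟦X⟧) : S⟦X⟧ := g - subst w (P g) - X * subst w (Q g)
  have hE : ∀ g, E g = w * E (h g) := fun g => by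
    simp only [E]
    rw [hP, hQ]
    nth_rewrite 1 [hstep g]
    ring
  have hdvd : ∀ N g, X ^ N ∣ E g := by
    intro N
    induction N with
    | zero => simp
    | succ N ih => intro g; rw [hE, pow_succ']; exact mul_dvd_mul (X_dvd_iff.mpr hw0) (ih _)
  have hEf : E f = 0 :=
    ext fun n => by simpa using X_pow_dvd_iff.mp (hdvd (n + 1) f) n n.lt_succ_self
  exact ⟨P f, Q f, by linear_combination hEf⟩

theorem C_dvd_of_map_mk_eq_zero {c : S} {g : S⟦X⟧}
    (hg : map (Ideal.Quotient.mk (Ideal.span {c})) g = 0) : C c ∣ g := by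
  have hcoeff : ∀ n, c ∣ coeff n g := fun n => Ideal.mem_span_singleton.mp <|
    Ideal.Quotient.eq_zero_iff_mem.mp (by simpa using congrArg (coeff n) hg)
  choose q hq using hcoeff
  exact ⟨mk q, ext fun n => by simp [hq]⟩

theorem C_dvd_of_C_dvd_mul_subst {c : S} {h w g : S⟦X⟧} (hw0 : constantCoeff w = 0)
    (hh : map (Ideal.Quotient.mk (Ideal.span {c})) h ∈ nonZeroDivisors _)
    (hw : map (Ideal.Quotient.mk (Ideal.span {c})) w ∈ nonZeroDivisors _)
    (hdvd : C c ∣ h * subst w g) : C c ∣ g := by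
  set π := Ideal.Quotient.mk (Ideal.span {c})
  have hπw0 : constantCoeff (map π w) = 0 := by
    rw [← coeff_zero_eq_constantCoeff_apply, coeff_map, coeff_zero_eq_constantCoeff_apply, hw0,
      map_zero]
  refine C_dvd_of_map_mk_eq_zero (eq_zero_of_subst_eq_zero hπw0 hw ?_)
  obtain ⟨q, hq⟩ := hdvd
  have hπc : π c = 0 := Ideal.Quotient.eq_zero_iff_mem.mpr (Ideal.mem_span_singleton_self c)
  have hmap : map π (subst w g) = subst (map π w) (map π g) :=
    map_subst (HasSubst.of_constantCoeff_zero' hw0) g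
  have hπ := congrArg (map π) hq
  rw [map_mul, hmap, map_mul, map_C, hπc, map_zero, zero_mul] at hπ
  exact (mul_left_mem_nonZeroDivisors_eq_zero_iff hh).mp hπ

theorem subst_subst_of_subst_eq {u w : S⟦X⟧} (hu : constantCoeff u = 0)
    (hw : constantCoeff w = 0) (hfix : subst u w = w) (g : S⟦X⟧) :
    subst u (subst w g) = subst w g := by
  rw [subst_comp_subst_apply (R := S) (HasSubst.of_constantCoeff_zero' hw)
    (HasSubst.of_constantCoeff_zero' hu), hfix]

theorem exists_isUnit_X_mul_eq_X_sq_mul {ubar : S⟦X⟧} (hcong : ubar + X ∈ Ideal.span {X ^ 2}) :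
    ∃ v : S⟦X⟧, IsUnit v ∧ X * ubar = X ^ 2 * v := by
  obtain ⟨r, hr⟩ := Ideal.mem_span_singleton'.mp hcong
  exact ⟨X * r - 1, isUnit_iff_constantCoeff.mpr (by simp), by linear_combination (-X) * hr⟩

theorem map_mk_two_X_add_mem_nonZeroDivisors {ubar : S⟦X⟧} {a : S}
    (ha : Ideal.Quotient.mk (Ideal.span {(2 : S)}) a ∈ nonZeroDivisors (S ⧸ Ideal.span {(2 : S)}))
    (hcong : ubar - (X + C a * X ^ 2) ∈ Ideal.span {(2 : S⟦X⟧), X ^ 3}) :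
    map (Ideal.Quotient.mk (Ideal.span {(2 : S)})) (X + ubar) ∈ nonZeroDivisors _ := by
  set π := Ideal.Quotient.mk (Ideal.span {(2 : S)})
  obtain ⟨c, d, hcd⟩ := Ideal.mem_span_pair.mp hcong
  have hπ2 : π 2 = 0 := Ideal.Quotient.eq_zero_iff_mem.mpr (Ideal.mem_span_singleton_self 2)
  have hX : X + ubar = C 2 * (X + c) + X ^ 2 * (C a + X * d) := by
    rw [map_ofNat C 2]; linear_combination -hcd
  have hmod : map π (X + ubar) = X ^ 2 * (C (π a) + X * map π d) := by simp [hX, hπ2]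
  rw [hmod]
  exact mul_mem (pow_mem MvPowerSeries.X_mem_nonzeroDivisors 2)
    (mem_nonZeroDivisors_of_constantCoeff (by simpa using ha))

end PowerSeries

/-- The antifixed part of the involution `σ : f(u) ↦ f(ū)` is exactly
`(u − ū)·S[[w]]` where `w := u·ū`. -/
theorem antifixed_points_of_conjugation_eq
    {S : Type*} [CommRing S] (h2 : (2 : S) ∈ nonZeroDivisors S)
    (ubar : PowerSeries S) (h0 : PowerSeries.constantCoeff (R := S) ubar = 0)
    (hcong : ubar + PowerSeries.X ∈ Ideal.span {(PowerSeries.X : PowerSeries S) ^ 2})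
    (hinv : PowerSeries.substInto ubar ubar = PowerSeries.X)
    (a : S)
    (ha : Ideal.Quotient.mk (Ideal.span {(2 : S)}) a ∈ nonZeroDivisors (S ⧸ Ideal.span {(2 : S)}))
    (hcong2 : ubar - (PowerSeries.X + PowerSeries.C (R := S) a * PowerSeries.X ^ 2) ∈
      Ideal.span {(2 : PowerSeries S), PowerSeries.X ^ 3})
    (f : PowerSeries S) :
    PowerSeries.substInto ubar f = -f ↔
      ∃ g : PowerSeries S,
        f = (PowerSeries.X - ubar) * PowerSeries.substInto (PowerSeries.X * ubar) g := by
  have hσ : HasSubst ubar := HasSubst.of_constantCoeff_zero' h0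
  have hw0 : constantCoeff (X * ubar) = 0 := by simp [h0]
  obtain ⟨v, hv, hw⟩ := exists_isUnit_X_mul_eq_X_sq_mul hcong
  rw [substInto_eq_subst h0] at hinv ⊢
  simp only [substInto_eq_subst hw0]
  have hfix := subst_subst_of_subst_eq h0 hw0 (by rw [subst_mul hσ, subst_X hσ, hinv, mul_comm])
  constructor
  · intro hf
    obtain ⟨P, Q, rfl⟩ := exists_eq_subst_add_X_mul_subst hw0 (hw ▸ hv.mul_right_dvd.mpr dvd_rfl) f
    have hPQ : 2 * subst (X * ubar) P + (X + ubar) * subst (X * ubar) Q = 0 := by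
      rw [subst_add hσ, subst_mul hσ, subst_X hσ, hfix, hfix] at hf
      linear_combination hf
    obtain ⟨G, rfl⟩ : C 2 ∣ Q :=
      C_dvd_of_C_dvd_mul_subst hw0 (map_mk_two_X_add_mem_nonZeroDivisors ha hcong2)
        (hw ▸ map_X_sq_mul_mem_nonZeroDivisors hv _)
        ⟨-subst (X * ubar) P, by rw [map_ofNat C 2]; linear_combination hPQ⟩
    rw [subst_mul (HasSubst.of_constantCoeff_zero' hw0), subst_C, map_ofNat] at hPQ ⊢
    have h2X : (2 : S⟦X⟧) ∈ nonZeroDivisors S⟦X⟧ :=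
      mem_nonZeroDivisors_of_constantCoeff (by rw [map_ofNat]; exact h2)
    have hP : subst (X * ubar) P + (X + ubar) * subst (X * ubar) G = 0 :=
      (mul_right_mem_nonZeroDivisors_eq_zero_iff h2X).mp (by linear_combination hPQ)
    exact ⟨G, by linear_combination hP⟩
  · rintro ⟨g, rfl⟩
    rw [subst_mul hσ, subst_sub hσ, subst_X hσ, hinv, hfix]
    ring
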